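/- arXiv:2002.10603 — 2 statements merged into one kernel-verified Lean document; each statement's English description precedes it below -/
import Mathlib

section
/- Let (M,g) be a closed Riemannian manifold of dimension at least three with a generic (bumpy) metric, and W > 0. Then the set ℱ^W of equivalence classes (under precomposition by PSL(2,ℂ)) of harmonic spheres u: S² → M with E(u) ≤ W is countable. -/
open Metric Filter

/-- The unit 2-sphere, the domain of harmonic spheres. -/
abbrev Sph : Type := Metric.sphere (0 : EuclideanSpace ℝ (Fin 3)) 1

/-- Countability of harmonic spheres with bounded energy for a generic (bumpy)
metric. `Harm` is the set of harmonic spheres `S² → M ⊂ ℝ^N`, `En` the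
Dirichlet energy, `locEn u s` the energy of `u` on `s ⊆ S²`, `d` the `W^{1,2}`
distance and `R` the equivalence `[u] = [f]` by precomposition with
`PSL(2,ℂ)`. Genericity is used through local rigidity (`hrigid`), and
Sacks–Uhlenbeck compactness (`hcpt`) holds for sequences of harmonic spheres
whose energy is bounded by `W` and whose local energy on balls of a fixed
radius is uniformly below `εsu`. Then the set `ℱ^W` of equivalence classes of
harmonic spheres of energy at most `W` is countable. -/
theorem stmt_14 {N : ℕ} (dimM : ℕ) (hdim : 3 ≤ dimM) (W : ℝ) (hW : 0 < W)
    (Harm : (Sph → EuclideanSpace ℝ (Fin N)) → Prop)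
    (En : (Sph → EuclideanSpace ℝ (Fin N)) → ℝ)
    (locEn : (Sph → EuclideanSpace ℝ (Fin N)) → Set Sph → ℝ)
    (d : (Sph → EuclideanSpace ℝ (Fin N)) →
      (Sph → EuclideanSpace ℝ (Fin N)) → ℝ)
    (R : (Sph → EuclideanSpace ℝ (Fin N)) →
      (Sph → EuclideanSpace ℝ (Fin N)) → Prop)
    (εsu : ℝ) (hεsu : 0 < εsu)
    (hR : Equivalence R)
    (hrigid : ∀ u, Harm u → ∃ ε > 0, ∀ f, Harm f → d f u < ε → R f u)
    (hsmall : ∀ u, Harm u → En u ≤ W →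
      ∃ δ > 0, ∀ x : Sph, locEn u (ball x δ) < εsu)
    (hmono : ∀ u, ∀ s t : Set Sph, s ⊆ t → locEn u s ≤ locEn u t)
    (hcpt : ∀ (f : ℕ → Sph → EuclideanSpace ℝ (Fin N)) (δ : ℝ), 0 < δ →
      (∀ i, Harm (f i)) → (∀ i, En (f i) ≤ W) →
      (∀ i, ∀ x : Sph, locEn (f i) (ball x δ) < εsu) →
      ∃ g : ℕ → ℕ, StrictMono g ∧ ∃ u, Harm u ∧ En u ≤ W ∧
        Tendsto (fun n => d (f (g n)) u) atTop (nhds 0)) :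
    Set.Countable {C : Set (Sph → EuclideanSpace ℝ (Fin N)) |
      ∃ u, Harm u ∧ En u ≤ W ∧ C = {f | R f u}} := by
  have key : {C : Set (Sph → EuclideanSpace ℝ (Fin N)) |
      ∃ u, Harm u ∧ En u ≤ W ∧ C = {f | R f u}} ⊆
      ⋃ n : ℕ, {C | ∃ u, Harm u ∧ En u ≤ W ∧ C = {f | R f u} ∧
        ∀ x : Sph, locEn u (ball x (1/(n+1))) < εsu} := by
    intro C hC
    obtain ⟨u, hu, hEn, hCeq⟩ := hC
    obtain ⟨δ, hδ, hloc⟩ := hsmall u hu hEn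
    obtain ⟨n, hn⟩ := exists_nat_one_div_lt hδ
    exact Set.mem_iUnion.2 ⟨n, u, hu, hEn, hCeq, fun x =>
      lt_of_le_of_lt (hmono u _ _ (ball_subset_ball (le_of_lt hn))) (hloc x)⟩
  apply Set.Countable.mono key
  apply Set.countable_iUnion
  intro n
  apply Set.Finite.countable
  by_contra hfin
  have hinf : Set.Infinite {C | ∃ u, Harm u ∧ En u ≤ W ∧ C = {f | R f u} ∧
      ∀ x : Sph, locEn u (ball x (1/(n+1))) < εsu} := hfin
  let e := hinf.natEmbedding
  have hchoice : ∀ i : ℕ, ∃ u, Harm u ∧ En u ≤ W ∧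
      ((e i : Set (Sph → EuclideanSpace ℝ (Fin N))) = {f | R f u}) ∧
      ∀ x : Sph, locEn u (ball x (1/(n+1))) < εsu := fun i => (e i).2
  choose uu hH hE hCeq hloc using hchoice
  have hδpos : (0:ℝ) < 1/(n+1) := by positivity
  obtain ⟨g, hg, u, hu, -, htend⟩ := hcpt uu (1/(n+1)) hδpos hH hE hloc
  obtain ⟨ε, hε, hrig⟩ := hrigid u hu
  have hev : ∀ᶠ k in atTop, d (uu (g k)) u < ε := htend.eventually_lt_const hε
  obtain ⟨K, hK⟩ := eventually_atTop.1 hev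
  have r1 : R (uu (g K)) u := hrig _ (hH _) (hK K le_rfl)
  have r2 : R (uu (g (K+1))) u := hrig _ (hH _) (hK (K+1) (by omega))
  have r12 : R (uu (g K)) (uu (g (K+1))) := hR.trans r1 (hR.symm r2)
  have hsets : (e (g K) : Set (Sph → EuclideanSpace ℝ (Fin N))) = e (g (K+1)) := by
    rw [hCeq (g K), hCeq (g (K+1))]
    ext f
    exact ⟨fun hf => hR.trans hf r12, fun hf => hR.trans hf (hR.symm r12)⟩
  have : g K = g (K+1) := e.injective (Subtype.ext hsets)
  exact absurd this (ne_of_lt (hg (by omega)))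
end

section
/- Let φ^t be the flow on the closed unit ball B̄^k generated by the vector field s ↦ -(1-|s|²)∇E(s), where E: B̄^k → ℝ is C² with -(1/c)Id ≤ D²E ≤ -c·Id and unique maximum m with |m| ≤ c/√10. Then for every κ ∈ (0, 1/4) there exists T > 0 such that for all v ∈ B̄^k with |v - m| ≥ κ, E(φ^T(v)) < E(0) - c/10. -/
open Metric Set RealInnerProductSpace

/-!
Since `‖m‖ < 1`, the maximum `m` is a critical point, strong concavity gives `E 0 ≥ E m - c/20`,
and along the flow `E` decreases at rate `(1 - ‖s‖²) ‖∇E s‖²`. If `E (φ T v) ≥ E 0 - c/10`, the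
whole trajectory stays where `E m - 3c/20 ≤ E ≤ E v ≤ E m - cκ²/2`. There `cκ ≤ ‖s - m‖ ≤ √(3/10)`, so `‖s‖² ≤ 4/5` and
`‖∇E s‖ ≥ c ‖s - m‖`, and the rate is at least `c⁴κ²/5`. For `T = 5/(c³κ²)` the energy would then
drop by `c`, which is impossible.
-/

theorem sub_le_mul_sub_of_hasDerivAt_le {f f' : ℝ → ℝ} {a b C : ℝ} (hab : a ≤ b)
    (hf : ∀ t ∈ Icc a b, HasDerivAt f (f' t) t) (hle : ∀ t ∈ Ioo a b, f' t ≤ C) :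
    f b - f a ≤ C * (b - a) :=
  (convex_Icc a b).image_sub_le_mul_sub_of_deriv_le
    (fun t ht => (hf t ht).continuousAt.continuousWithinAt)
    (fun t ht => (hf t (interior_subset ht)).differentiableAt.differentiableWithinAt)
    (fun t ht => by
      rw [interior_Icc] at ht
      rw [(hf t (Ioo_subset_Icc_self ht)).deriv]
      exact hle t ht)
    a (left_mem_Icc.2 hab) b (right_mem_Icc.2 hab) hab

theorem le_add_add_half_of_hasDerivAt_le {g g' g'' : ℝ → ℝ} {a : ℝ}
    (hg : ∀ t ∈ Icc (0 : ℝ) 1, HasDerivAt g (g' t) t)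
    (hg' : ∀ t ∈ Icc (0 : ℝ) 1, HasDerivAt g' (g'' t) t)
    (hle : ∀ t ∈ Icc (0 : ℝ) 1, g'' t ≤ a) :
    g 1 ≤ g 0 + g' 0 + a / 2 := by
  have hslope : ∀ t ∈ Icc (0 : ℝ) 1, g' t - g' 0 ≤ a * t := fun t ht => by
    simpa using sub_le_mul_sub_of_hasDerivAt_le ht.1
      (fun s hs => hg' s ⟨hs.1, hs.2.trans ht.2⟩)
      (fun s hs => hle s ⟨hs.1.le, hs.2.le.trans ht.2⟩)
  have hremainder : ∀ t ∈ Icc (0 : ℝ) 1, HasDerivAt (fun t => g t - g' 0 * t - a / 2 * t ^ 2)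
      (g' t - g' 0 - a * t) t := fun t ht => by
    have := ((hg t ht).sub ((hasDerivAt_id' t).const_mul (g' 0))).sub
      ((hasDerivAt_pow 2 t).const_mul (a / 2))
    exact this.congr_deriv (by norm_num; ring)
  have := sub_le_mul_sub_of_hasDerivAt_le (C := 0) zero_le_one hremainder
    (fun t ht => by linarith [hslope t (Ioo_subset_Icc_self ht)])
  simp only [sub_zero, mul_one, mul_zero, one_pow, sub_nonpos] at this
  linarith

section

variable {F : Type*} [NormedAddCommGroup F] [InnerProductSpace ℝ F] [CompleteSpace F]
  {E : F → ℝ}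

theorem hasDerivAt_comp_add_smul {x u : F} {t : ℝ} (hE : DifferentiableAt ℝ E (x + t • u)) :
    HasDerivAt (fun s : ℝ => E (x + s • u)) ⟪gradient E (x + t • u), u⟫ t := by
  have hline : HasDerivAt (fun s : ℝ => x + s • u) u t := by
    simpa using ((hasDerivAt_id t).smul_const u).const_add x
  exact hE.hasGradientAt.hasFDerivAt.comp_hasDerivAt t hline

theorem inner_gradient_eq_fderiv (y u : F) : ⟪gradient E y, u⟫ = fderiv ℝ E y u := by
  rw [← InnerProductSpace.toDual_apply_apply, toDual_gradient]

theorem hasDerivAt_inner_gradient_add_smul (hE : ContDiff ℝ 2 E) (x u : F) (t : ℝ) :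
    HasDerivAt (fun s : ℝ => ⟪gradient E (x + s • u), u⟫)
      (iteratedFDeriv ℝ 2 E (x + t • u) ![u, u]) t := by
  have hline : HasDerivAt (fun s : ℝ => x + s • u) u t := by
    simpa using ((hasDerivAt_id t).smul_const u).const_add x
  have hE' : Differentiable ℝ (fderiv ℝ E) :=
    (hE.fderiv_right (m := 1) (by norm_num)).differentiable one_ne_zero
  have := ((hE' _).hasFDerivAt.comp_hasDerivAt t hline).clm_apply (hasDerivAt_const t u)
  simpa [inner_gradient_eq_fderiv, iteratedFDeriv_two_apply] using this

section StrongConcavity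

variable {S : Set F} {m s : F}

theorem inner_gradient_sub_le_and_le_of_hessian_le {μ : ℝ} (hE : ContDiff ℝ 2 E)
    (hS : Convex ℝ S) (hhess : ∀ y ∈ S, ∀ v, iteratedFDeriv ℝ 2 E y ![v, v] ≤ -μ * ‖v‖ ^ 2)
    (hm : m ∈ S) (hs : s ∈ S) (hgm : gradient E m = 0) :
    ⟪gradient E s, s - m⟫ ≤ -μ * ‖s - m‖ ^ 2 ∧ E s ≤ E m - μ / 2 * ‖s - m‖ ^ 2 := by
  have hseg : ∀ t ∈ Icc (0 : ℝ) 1, iteratedFDeriv ℝ 2 E (m + t • (s - m)) ![s - m, s - m] ≤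
      -μ * ‖s - m‖ ^ 2 := fun t ht => hhess _ (hS.add_smul_sub_mem hm hs ht) _
  have hg := fun t (_ : t ∈ Icc (0 : ℝ) 1) =>
    hasDerivAt_comp_add_smul (x := m) (u := s - m) (t := t) ((hE.differentiable two_ne_zero) _)
  have hg' := fun t (_ : t ∈ Icc (0 : ℝ) 1) => hasDerivAt_inner_gradient_add_smul hE m (s - m) t
  have hslope := sub_le_mul_sub_of_hasDerivAt_le zero_le_one hg'
    (fun t ht => hseg t (Ioo_subset_Icc_self ht))
  have htaylor := le_add_add_half_of_hasDerivAt_le hg hg' hseg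
  simp only [one_smul, zero_smul, add_zero, add_sub_cancel, hgm, inner_zero_left] at hslope htaylor
  constructor <;> linarith

theorem le_of_neg_le_hessian {L : ℝ} (hE : ContDiff ℝ 2 E)
    (hS : Convex ℝ S) (hhess : ∀ y ∈ S, ∀ v, -L * ‖v‖ ^ 2 ≤ iteratedFDeriv ℝ 2 E y ![v, v])
    (hm : m ∈ S) (hs : s ∈ S) (hgm : gradient E m = 0) :
    E m - L / 2 * ‖s - m‖ ^ 2 ≤ E s := by
  have hseg : ∀ t ∈ Icc (0 : ℝ) 1, -iteratedFDeriv ℝ 2 E (m + t • (s - m)) ![s - m, s - m] ≤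
      L * ‖s - m‖ ^ 2 := fun t ht => by
    linarith [hhess _ (hS.add_smul_sub_mem hm hs ht) (s - m)]
  have hg := fun t (_ : t ∈ Icc (0 : ℝ) 1) =>
    (hasDerivAt_comp_add_smul (x := m) (u := s - m) (t := t)
      ((hE.differentiable two_ne_zero) _)).neg
  have hg' := fun t (_ : t ∈ Icc (0 : ℝ) 1) =>
    (hasDerivAt_inner_gradient_add_smul hE m (s - m) t).neg
  have htaylor := le_add_add_half_of_hasDerivAt_le hg hg' hseg
  simp only [Pi.neg_apply, one_smul, zero_smul, add_zero, add_sub_cancel, hgm, inner_zero_left,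
    neg_zero] at htaylor
  linarith

end StrongConcavity

theorem IsLocalMax.gradient_eq_zero {m : F} (h : IsLocalMax E m) : gradient E m = 0 := by
  rw [gradient, h.fderiv_eq_zero, map_zero]

theorem hasDerivAt_comp_of_hasDerivAt_neg_smul_gradient {γ : ℝ → F} {a t : ℝ}
    (hE : DifferentiableAt ℝ E (γ t)) (hγ : HasDerivAt γ (-(a • gradient E (γ t))) t) :
    HasDerivAt (fun s => E (γ s)) (-(a * ‖gradient E (γ t)‖ ^ 2)) t := by
  have := hE.hasGradientAt.hasFDerivAt.comp_hasDerivAt t hγ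
  rwa [InnerProductSpace.toDual_apply_apply, inner_neg_right, real_inner_smul_right,
    real_inner_self_eq_norm_sq] at this

section Flow

def HessianPinchedOnUnitBall (E : F → ℝ) (c : ℝ) : Prop :=
  ∀ s ∈ closedBall (0 : F) 1, ∀ v : F,
    -(1 / c) * ‖v‖ ^ 2 ≤ iteratedFDeriv ℝ 2 E s ![v, v] ∧
    iteratedFDeriv ℝ 2 E s ![v, v] ≤ -c * ‖v‖ ^ 2

variable {c κ : ℝ} {m : F}

theorem le_dissipation {s : F} (hE : ContDiff ℝ 2 E) (hc0 : 0 < c) (hκ : 0 < κ)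
    (hhess : HessianPinchedOnUnitBall E c)
    (hm : ‖m‖ ^ 2 ≤ 1 / 10) (hgm : gradient E m = 0) (hs : s ∈ closedBall (0 : F) 1)
    (hlow : E m - 3 * c / 20 ≤ E s) (hhigh : E s ≤ E m - c / 2 * κ ^ 2) :
    c ^ 4 * κ ^ 2 / 5 ≤ (1 - ‖s‖ ^ 2) * ‖gradient E s‖ ^ 2 := by
  have hmB : m ∈ closedBall (0 : F) 1 := mem_closedBall_zero_iff.2 (by nlinarith [norm_nonneg m])
  obtain ⟨hinner, hup⟩ := inner_gradient_sub_le_and_le_of_hessian_le hE (convex_closedBall 0 1)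
    (fun y hy v => (hhess y hy v).2) hmB hs hgm
  have hdown := le_of_neg_le_hessian hE (convex_closedBall 0 1)
    (fun y hy v => (hhess y hy v).1) hmB hs hgm
  set d := ‖s - m‖
  set G := ‖gradient E s‖
  have hd_low : c ^ 2 * κ ^ 2 ≤ d ^ 2 := by
    have : c * κ ^ 2 ≤ 1 / c * d ^ 2 := by linarith
    calc c ^ 2 * κ ^ 2 = c * (c * κ ^ 2) := by ring
      _ ≤ c * (1 / c * d ^ 2) := by gcongr
      _ = d ^ 2 := by field_simp
  have hd_up : d ^ 2 ≤ 3 / 10 := by nlinarith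
  have hdpos : 0 < d := by
    have : 0 < c ^ 2 * κ ^ 2 := by positivity
    nlinarith [norm_nonneg (s - m)]
  have hgrad : c * d ≤ G := by
    have hcs : -⟪gradient E s, s - m⟫ ≤ G * d := by
      rw [← inner_neg_right]
      exact (real_inner_le_norm _ _).trans_eq (by rw [norm_neg])
    nlinarith
  have hs_norm : ‖s‖ ^ 2 ≤ 4 / 5 := by
    calc ‖s‖ ^ 2 ≤ (‖m‖ + d) ^ 2 := by gcongr; exact norm_le_norm_add_norm_sub' s m
      _ ≤ 2 * (‖m‖ ^ 2 + d ^ 2) := by nlinarith [sq_nonneg (‖m‖ - d)]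
      _ ≤ 4 / 5 := by linarith
  calc c ^ 4 * κ ^ 2 / 5 ≤ 1 / 5 * (c * d) ^ 2 := by nlinarith
    _ ≤ (1 - ‖s‖ ^ 2) * G ^ 2 := by gcongr <;> linarith

theorem energy_lt_of_flow {γ : ℝ → F} (hE : ContDiff ℝ 2 E) (hc0 : 0 < c) (hκ : 0 < κ)
    (hhess : HessianPinchedOnUnitBall E c)
    (hm : ‖m‖ ^ 2 ≤ 1 / 10) (hgm : gradient E m = 0)
    (hγ : ∀ t, HasDerivAt γ (-((1 - ‖γ t‖ ^ 2) • gradient E (γ t))) t)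
    (hγball : ∀ t ≥ 0, γ t ∈ closedBall (0 : F) 1) (hκγ : κ ≤ ‖γ 0 - m‖) :
    E (γ (5 / (c ^ 3 * κ ^ 2))) < E m - 3 * c / 20 := by
  set T := 5 / (c ^ 3 * κ ^ 2) with hT
  have hf (t : ℝ) : HasDerivAt (fun t => E (γ t))
      (-((1 - ‖γ t‖ ^ 2) * ‖gradient E (γ t)‖ ^ 2)) t :=
    hasDerivAt_comp_of_hasDerivAt_neg_smul_gradient ((hE.differentiable two_ne_zero) _) (hγ t)
  have hanti {t₁ t₂ : ℝ} (h₁ : 0 ≤ t₁) (h₁₂ : t₁ ≤ t₂) : E (γ t₂) ≤ E (γ t₁) := by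
    have := sub_le_mul_sub_of_hasDerivAt_le (C := 0) h₁₂ (fun t _ => hf t) fun t ht => by
      have := mem_closedBall_zero_iff.1 (hγball t (h₁.trans ht.1.le))
      have : 0 ≤ 1 - ‖γ t‖ ^ 2 := by nlinarith [norm_nonneg (γ t)]
      nlinarith [mul_nonneg this (sq_nonneg ‖gradient E (γ t)‖)]
    linarith
  have hstart : E (γ 0) ≤ E m - c / 2 * κ ^ 2 := by
    have hmB : m ∈ closedBall (0 : F) 1 :=
      mem_closedBall_zero_iff.2 (by nlinarith [norm_nonneg m])
    have := (inner_gradient_sub_le_and_le_of_hessian_le hE (convex_closedBall 0 1)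
      (fun y hy v => (hhess y hy v).2) hmB (hγball 0 le_rfl) hgm).2
    have : c / 2 * κ ^ 2 ≤ c / 2 * ‖γ 0 - m‖ ^ 2 := by gcongr
    linarith
  by_contra! hend
  have hrate (t : ℝ) (ht : t ∈ Ioo 0 T) :
      -((1 - ‖γ t‖ ^ 2) * ‖gradient E (γ t)‖ ^ 2) ≤ -(c ^ 4 * κ ^ 2 / 5) :=
    neg_le_neg (le_dissipation hE hc0 hκ hhess hm hgm (hγball t ht.1.le)
      (hend.trans (hanti ht.1.le ht.2.le)) ((hanti le_rfl ht.1.le).trans hstart))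
  have hdecay := sub_le_mul_sub_of_hasDerivAt_le (by positivity) (fun t _ => hf t) hrate
  have : c ^ 4 * κ ^ 2 / 5 * (T - 0) = c := by rw [hT]; field_simp; ring
  nlinarith [sq_nonneg κ]

end Flow

end

theorem stmt_19_general {k : ℕ} (E : EuclideanSpace ℝ (Fin k) → ℝ)
    (c : ℝ) (hc0 : 0 < c) (hc1 : c < 1) (hE : ContDiff ℝ 2 E)
    (hhess : ∀ s ∈ closedBall (0 : EuclideanSpace ℝ (Fin k)) 1,
      ∀ v : EuclideanSpace ℝ (Fin k),
        -(1 / c) * ‖v‖ ^ 2 ≤ iteratedFDeriv ℝ 2 E s ![v, v] ∧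
        iteratedFDeriv ℝ 2 E s ![v, v] ≤ -c * ‖v‖ ^ 2)
    (m : EuclideanSpace ℝ (Fin k))
    (hm : m ∈ closedBall (0 : EuclideanSpace ℝ (Fin k)) 1)
    (hmax : IsMaxOn E (closedBall 0 1) m)
    (hmn : ‖m‖ ≤ c / Real.sqrt 10)
    (φ : ℝ → EuclideanSpace ℝ (Fin k) → EuclideanSpace ℝ (Fin k))
    (hφ0 : ∀ v, φ 0 v = v)
    (hφode : ∀ (v : EuclideanSpace ℝ (Fin k)) (t : ℝ),
      HasDerivAt (fun s => φ s v) (-((1 - ‖φ t v‖ ^ 2) • gradient E (φ t v))) t)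
    (hφball : ∀ t ≥ (0 : ℝ), ∀ v ∈ closedBall (0 : EuclideanSpace ℝ (Fin k)) 1,
      φ t v ∈ closedBall (0 : EuclideanSpace ℝ (Fin k)) 1) :
    ∀ κ : ℝ, 0 < κ → κ < 1 / 4 →
      ∃ T > (0 : ℝ), ∀ v ∈ closedBall (0 : EuclideanSpace ℝ (Fin k)) 1,
        κ ≤ ‖v - m‖ → E (φ T v) < E 0 - c / 10 := by
  intro κ hκ0 _
  have hmc : ‖m‖ ^ 2 ≤ c ^ 2 / 10 := by
    simpa [div_pow] using pow_le_pow_left₀ (norm_nonneg m) hmn 2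
  have hm10 : ‖m‖ ^ 2 ≤ 1 / 10 := hmc.trans (by gcongr; nlinarith)
  have hgm : gradient E m = 0 := (hmax.isLocalMax (closedBall_mem_nhds_of_mem
    (mem_ball_zero_iff.2 (by nlinarith [norm_nonneg m])))).gradient_eq_zero
  have hE0 : E m - c / 20 ≤ E 0 := by
    have := le_of_neg_le_hessian hE (convex_closedBall 0 1) (fun y hy v => (hhess y hy v).1) hm
      (mem_closedBall_self zero_le_one) hgm
    have : 1 / c / 2 * ‖0 - m‖ ^ 2 ≤ c / 20 := by
      calc 1 / c / 2 * ‖0 - m‖ ^ 2 ≤ 1 / c / 2 * (c ^ 2 / 10) := by rw [zero_sub, norm_neg]; gcongr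
        _ = c / 20 := by field_simp; ring
    linarith
  refine ⟨5 / (c ^ 3 * κ ^ 2), by positivity, fun v hv hκv => ?_⟩
  have := energy_lt_of_flow hE hc0 hκ0 hhess hm10 hgm (hφode v) (fun t ht => hφball t ht v hv)
    (by rwa [hφ0])
  linarith

/-- Let `φ` be the flow on the closed unit ball `B̄^k` generated by the vector
field `s ↦ -(1-|s|²)∇E(s)`, where `E` is `C²` with `-(1/c)Id ≤ D²E ≤ -c·Id`
(`0 < c < 1`) and unique maximum `m` with `|m| ≤ c/√10`. Then for every
`κ ∈ (0, 1/4)` there is `T > 0` such that `E(φ_T(v)) < E(0) - c/10` for all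
`v ∈ B̄^k` with `|v - m| ≥ κ`. -/
theorem stmt_19 {k : ℕ} (hk : 1 ≤ k) (E : EuclideanSpace ℝ (Fin k) → ℝ)
    (c : ℝ) (hc0 : 0 < c) (hc1 : c < 1) (hE : ContDiff ℝ 2 E)
    (hhess : ∀ s ∈ closedBall (0 : EuclideanSpace ℝ (Fin k)) 1,
      ∀ v : EuclideanSpace ℝ (Fin k),
        -(1 / c) * ‖v‖ ^ 2 ≤ iteratedFDeriv ℝ 2 E s ![v, v] ∧
        iteratedFDeriv ℝ 2 E s ![v, v] ≤ -c * ‖v‖ ^ 2)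
    (m : EuclideanSpace ℝ (Fin k))
    (hm : m ∈ closedBall (0 : EuclideanSpace ℝ (Fin k)) 1)
    (hmax : IsMaxOn E (closedBall 0 1) m)
    (hmuniq : ∀ m' ∈ closedBall (0 : EuclideanSpace ℝ (Fin k)) 1,
      IsMaxOn E (closedBall 0 1) m' → m' = m)
    (hmn : ‖m‖ ≤ c / Real.sqrt 10)
    (φ : ℝ → EuclideanSpace ℝ (Fin k) → EuclideanSpace ℝ (Fin k))
    (hφ0 : ∀ v, φ 0 v = v)
    (hφode : ∀ (v : EuclideanSpace ℝ (Fin k)) (t : ℝ),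
      HasDerivAt (fun s => φ s v) (-((1 - ‖φ t v‖ ^ 2) • gradient E (φ t v))) t)
    (hφball : ∀ t ≥ (0 : ℝ), ∀ v ∈ closedBall (0 : EuclideanSpace ℝ (Fin k)) 1,
      φ t v ∈ closedBall (0 : EuclideanSpace ℝ (Fin k)) 1) :
    ∀ κ : ℝ, 0 < κ → κ < 1 / 4 →
      ∃ T > (0 : ℝ), ∀ v ∈ closedBall (0 : EuclideanSpace ℝ (Fin k)) 1,
        κ ≤ ‖v - m‖ → E (φ T v) < E 0 - c / 10 :=
  stmt_19_general E c hc0 hc1 hE hhess m hm hmax hmn φ hφ0 hφode hφball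
end
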